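/- arXiv:1110.5657 — 5 statements merged into one kernel-verified Lean document; each statement's English description precedes it below -/
import Mathlib

section
/- If f : [0,1] → ℂ is a parameterization of an arc A (a continuous bijection from [0,1] onto A), then f(0) and f(1) are precisely the non-cut points of A. -/
/-- `p` is a cut point of `X`: `p ∈ X` and `X \ {p}` is disconnected. -/
def IsCutPoint (X : Set ℂ) (p : ℂ) : Prop :=
  p ∈ X ∧ ¬ IsPreconnected (X \ {p})

/-!
A continuous injection of the compact interval `[0,1]` into the Hausdorff space `ℂ` is a
homeomorphism onto its image `A`, so `A \ {f t}` is connected exactly when `[0,1] \ {t}` is, and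
the latter happens only at the endpoints `t = 0` and `t = 1`.
-/

open Set Topology

theorem IsCompact.isPreconnected_image_iff_of_injOn {X Y : Type*} [TopologicalSpace X]
    [TopologicalSpace Y] [T2Space Y] {f : X → Y} {K S : Set X} (hK : IsCompact K)
    (hf : ContinuousOn f K) (hinj : InjOn f K) (hS : S ⊆ K) :
    IsPreconnected (f '' S) ↔ IsPreconnected S := by
  have : CompactSpace K := isCompact_iff_compactSpace.mp hK
  have hemb : IsClosedEmbedding (K.domRestrict f) :=
    hf.domRestrict.isClosedEmbedding (injOn_iff_injective.mp hinj)
  rw [← inter_eq_left.mpr hS, ← image_domRestrict, hemb.isInducing.isPreconnected_image,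
    ← IsInducing.subtypeVal.isPreconnected_image, Subtype.image_preimage_coe, inter_comm]

theorem isPreconnected_Icc_sdiff_singleton_iff {α : Type*} [ConditionallyCompleteLinearOrder α]
    [TopologicalSpace α] [OrderTopology α] [DenselyOrdered α] {a b t : α} (ht : t ∈ Icc a b) :
    IsPreconnected (Icc a b \ {t}) ↔ t = a ∨ t = b := by
  rw [isPreconnected_iff_ordConnected]
  constructor
  · intro hconn
    by_contra! hne
    have ha : a ∈ Icc a b \ {t} := ⟨left_mem_Icc.mpr (ht.1.trans ht.2), hne.1.symm⟩
    have hb : b ∈ Icc a b \ {t} := ⟨right_mem_Icc.mpr (ht.1.trans ht.2), hne.2.symm⟩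
    exact (hconn.out ha hb ht).2 rfl
  · rintro (rfl | rfl)
    · rw [Icc_sdiff_left]
      exact ordConnected_Ioc
    · rw [Icc_sdiff_right]
      exact ordConnected_Ico

theorem not_isCutPoint_image_Icc_iff {f : ℝ → ℂ} (hcont : ContinuousOn f (Icc 0 1))
    (hinj : InjOn f (Icc 0 1)) {t : ℝ} (ht : t ∈ Icc 0 1) :
    ¬ IsCutPoint (f '' Icc 0 1) (f t) ↔ t = 0 ∨ t = 1 := by
  rw [IsCutPoint, not_and, not_not, imp_iff_right (mem_image_of_mem f ht), ← image_singleton,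
    ← hinj.image_sdiff_subset (singleton_subset_iff.mpr ht),
    isCompact_Icc.isPreconnected_image_iff_of_injOn hcont hinj sdiff_subset,
    isPreconnected_Icc_sdiff_singleton_iff ht]

theorem noncut_points_of_arc (A : Set ℂ) (f : ℝ → ℂ)
    (hcont : ContinuousOn f (Set.Icc 0 1)) (hinj : Set.InjOn f (Set.Icc 0 1))
    (himg : f '' Set.Icc 0 1 = A) :
    {x ∈ A | ¬ IsCutPoint A x} = {f 0, f 1} := by
  subst himg
  have h0 : (0 : ℝ) ∈ Icc 0 1 := left_mem_Icc.mpr zero_le_one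
  have h1 : (1 : ℝ) ∈ Icc 0 1 := right_mem_Icc.mpr zero_le_one
  ext x
  constructor
  · rintro ⟨⟨t, ht, rfl⟩, hx⟩
    rcases (not_isCutPoint_image_Icc_iff hcont hinj ht).mp hx with rfl | rfl
    · exact mem_insert _ _
    · exact mem_insert_of_mem _ rfl
  · rintro (rfl | rfl)
    · exact ⟨mem_image_of_mem f h0, (not_isCutPoint_image_Icc_iff hcont hinj h0).mpr (.inl rfl)⟩
    · exact ⟨mem_image_of_mem f h1, (not_isCutPoint_image_Icc_iff hcont hinj h1).mpr (.inr rfl)⟩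
end

section
/- If U ⊆ ℂ is a nonempty open connected set and p, q are distinct points of U, then there is a polygonal arc from p to q contained in U whose intermediate vertexes all have rational real and imaginary parts. Moreover, for every ε > 0, such a polygonal arc can be chosen so that each of its line segments has length less than ε. -/
/-- `A` is an arc from `p` to `q`. -/
def ArcFrom (p q : ℂ) (A : Set ℂ) : Prop :=
  ∃ f : ℝ → ℂ, ContinuousOn f (Set.Icc 0 1) ∧ Set.InjOn f (Set.Icc 0 1) ∧
    f '' Set.Icc 0 1 = A ∧ f 0 = p ∧ f 1 = q

/-- A complex number is rational if both its real and imaginary parts are. -/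
def IsRationalPoint (z : ℂ) : Prop :=
  (∃ a : ℚ, (a : ℝ) = z.re) ∧ ∃ b : ℚ, (b : ℝ) = z.im

/-!
Fix a rational mesh `δ` and a rational offset `c` such that `p` and `q` lie on no line of the
square grid with vertices `c + δ (ℤ + ℤ i)`. For every fine enough grid, the lower-left corners of
the cells of `p` and `q` are joined by a path of grid edges inside `U`: the relation "joined in
every fine grid" is transitive and holds between nearby points, which are joined by a staircase
inside a ball contained in `U`, so it holds on all of the connected set `U`. The vertices of a
graph-theoretic path are distinct, and two distinct grid edges meet at most in a common endpoint;
the segment from `p` (or `q`) to its corner crosses the open cell and meets the grid only at the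
corner. So `p`, the path and `q` form a simple polygonal chain, which is an arc, and its inner
vertices are grid vertices, hence rational. The grid geometry is done for the standard lattice
`ℤ × ℤ ⊆ ℂ` and transported by `z ↦ c + δ z`.
-/

open Set Metric Complex

theorem arcFrom_segment {a b : ℂ} (hab : a ≠ b) : ArcFrom a b (segment ℝ a b) :=
  ⟨AffineMap.lineMap a b, (AffineMap.lineMap_continuous).continuousOn,
    ((AffineMap.lineMap_injective ℝ hab).injOn), (segment_eq_image_lineMap ℝ a b).symm,
    AffineMap.lineMap_apply_zero a b, AffineMap.lineMap_apply_one a b⟩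

theorem ArcFrom.union {a b c : ℂ} {A B : Set ℂ} (hA : ArcFrom a b A) (hB : ArcFrom b c B)
    (hAB : A ∩ B ⊆ {b}) : ArcFrom a c (A ∪ B) := by
  obtain ⟨f, hfc, hfi, rfl, hf0, hf1⟩ := hA
  obtain ⟨g, hgc, hgi, rfl, hg0, hg1⟩ := hB
  set h : ℝ → ℂ := fun t => if t ≤ 1 / 2 then f (2 * t) else g (2 * t - 1)
  have hleft : EqOn h (fun t => f (2 * t)) (Icc 0 (1 / 2)) := fun t ht => if_pos ht.2
  have hright : EqOn h (fun t => g (2 * t - 1)) (Icc (1 / 2) 1) := by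
    intro t ht
    rcases ht.1.eq_or_lt with rfl | ht'
    · simp [h, hf1, hg0]
    · exact if_neg (not_le.2 ht')
  have hleft_maps : MapsTo (fun t : ℝ => 2 * t) (Icc 0 (1 / 2)) (Icc 0 1) :=
    fun t ht => ⟨by linarith [ht.1], by linarith [ht.2]⟩
  have hright_maps : MapsTo (fun t : ℝ => 2 * t - 1) (Icc (1 / 2) 1) (Icc 0 1) :=
    fun t ht => ⟨by linarith [ht.1], by linarith [ht.2]⟩
  have hsplit : Icc (0 : ℝ) 1 = Icc 0 (1 / 2) ∪ Icc (1 / 2) 1 :=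
    (Icc_union_Icc_eq_Icc (by norm_num) (by norm_num)).symm
  refine ⟨h, ?_, ?_, ?_, by simp [h, hf0], by norm_num [h, hg1]⟩
  · rw [hsplit]
    refine ContinuousOn.union_of_isClosed ?_ ?_ isClosed_Icc isClosed_Icc
    · exact (hfc.comp (by fun_prop) hleft_maps).congr hleft
    · exact (hgc.comp (by fun_prop) hright_maps).congr hright
  · rw [← Ico_union_Icc_eq_Icc (by norm_num : (0 : ℝ) ≤ 1 / 2) (by norm_num : (1 / 2 : ℝ) ≤ 1),
      injOn_union (disjoint_left.2 fun t h1 h2 => h1.2.not_ge h2.1)]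
    refine ⟨(hfi.comp (fun s _ t _ hst => by simpa using hst) hleft_maps |>.congr hleft.symm).mono
      Ico_subset_Icc_self, hgi.comp (fun s _ t _ hst => by simpa using hst) hright_maps
      |>.congr hright.symm, fun s hs t ht hst => ?_⟩
    rw [hleft (Ico_subset_Icc_self hs), hright ht] at hst
    dsimp only at hst
    have hb : g (2 * t - 1) = b :=
      hAB ⟨hst ▸ mem_image_of_mem f (hleft_maps (Ico_subset_Icc_self hs)),
        mem_image_of_mem g (hright_maps ht)⟩
    have := hfi (hleft_maps (Ico_subset_Icc_self hs)) (right_mem_Icc.2 zero_le_one)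
      ((hst.trans hb).trans hf1.symm)
    linarith [hs.2]
  · have hleft_surj : SurjOn (fun t : ℝ => 2 * t) (Icc 0 (1 / 2)) (Icc 0 1) :=
      fun y hy => ⟨y / 2, ⟨by linarith [hy.1], by linarith [hy.2]⟩, by ring⟩
    have hright_surj : SurjOn (fun t : ℝ => 2 * t - 1) (Icc (1 / 2) 1) (Icc 0 1) :=
      fun y hy => ⟨(y + 1) / 2, ⟨by linarith [hy.1], by linarith [hy.2]⟩, by ring⟩
    conv_lhs => rw [hsplit, image_union, hleft.image_eq, hright.image_eq]
    nth_rw 1 [← hleft_surj.image_eq_of_mapsTo hleft_maps]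
    rw [← hright_surj.image_eq_of_mapsTo hright_maps, image_image, image_image]

def IsSimpleChain {E : Type*} [AddCommGroup E] [Module ℝ E] (n : ℕ) (v : ℕ → E) : Prop :=
  (∀ i < n, v i ≠ v (i + 1)) ∧
    ∀ i j, i < j → j < n → segment ℝ (v i) (v (i + 1)) ∩ segment ℝ (v j) (v (j + 1)) ⊆ {v j}

theorem IsSimpleChain.map {E F : Type*} [AddCommGroup E] [Module ℝ E] [AddCommGroup F] [Module ℝ F]
    {n : ℕ} {v : ℕ → E} (h : IsSimpleChain n v) (f : E →ᵃ[ℝ] F) (hf : Function.Injective f) :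
    IsSimpleChain n (f ∘ v) := by
  refine ⟨fun i hi => hf.ne (h.1 i hi), fun i j hij hj => ?_⟩
  simp only [Function.comp_apply, ← image_segment, ← image_inter hf]
  exact (image_mono (h.2 i j hij hj)).trans image_singleton.subset

theorem arcFrom_iUnion_segment {n : ℕ} (hn : 0 < n) {v : ℕ → ℂ} (hv : IsSimpleChain n v) :
    ArcFrom (v 0) (v n) (⋃ i ∈ Finset.range n, segment ℝ (v i) (v (i + 1))) := by
  induction n, hn using Nat.le_induction with
  | base => simpa using arcFrom_segment (hv.1 0 one_pos)
  | succ n hn ih =>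
    rw [Finset.range_add_one, Finset.set_biUnion_insert, union_comm]
    refine (ih ⟨fun i hi => hv.1 i (by omega), fun i j hij hj => hv.2 i j hij (by omega)⟩).union
      (arcFrom_segment (hv.1 n (by omega))) ?_
    rw [iUnion₂_inter]
    exact iUnion₂_subset fun i hi => hv.2 i n (Finset.mem_range.1 hi) (by omega)

def latticePoint (a : ℤ × ℤ) : ℂ := a.1 + a.2 * I

@[simp] theorem latticePoint_re (a : ℤ × ℤ) : (latticePoint a).re = a.1 := by simp [latticePoint]

@[simp] theorem latticePoint_im (a : ℤ × ℤ) : (latticePoint a).im = a.2 := by simp [latticePoint]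

theorem latticePoint_injective : Function.Injective latticePoint := fun a b h =>
  Prod.ext (by simpa using congrArg re h) (by simpa using congrArg im h)

def gridDist (a b : ℤ × ℤ) : ℤ := |a.1 - b.1| + |a.2 - b.2|

theorem dist_latticePoint_le (a b : ℤ × ℤ) :
    dist (latticePoint a) (latticePoint b) ≤ gridDist a b := by
  rw [dist_eq]
  refine (norm_le_abs_re_add_abs_im _).trans_eq ?_
  simp [gridDist]

noncomputable def latticeFloor (z : ℂ) : ℤ × ℤ := (⌊z.re⌋, ⌊z.im⌋)

theorem dist_latticePoint_latticeFloor_lt (z : ℂ) : dist z (latticePoint (latticeFloor z)) < 2 := by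
  rw [dist_eq]
  refine (norm_le_abs_re_add_abs_im _).trans_lt ?_
  simp only [sub_re, sub_im, latticePoint_re, latticePoint_im, latticeFloor]
  rw [abs_of_nonneg (sub_nonneg.2 (Int.floor_le _)), abs_of_nonneg (sub_nonneg.2 (Int.floor_le _))]
  linarith [Int.lt_floor_add_one z.re, Int.lt_floor_add_one z.im]

theorem abs_floor_sub_floor_lt (u v : ℝ) : |(⌊u⌋ - ⌊v⌋ : ℝ)| < |u - v| + 1 := by
  rw [abs_lt]
  constructor <;> linarith [Int.floor_le u, Int.floor_le v, Int.lt_floor_add_one u,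
    Int.lt_floor_add_one v, le_abs_self (u - v), neg_abs_le (u - v)]

theorem gridDist_latticeFloor_le (x y : ℂ) :
    (gridDist (latticeFloor x) (latticeFloor y) : ℝ) ≤ 2 * dist x y + 2 := by
  have hre := abs_floor_sub_floor_lt x.re y.re
  have him := abs_floor_sub_floor_lt x.im y.im
  have h1 : |x.re - y.re| ≤ dist x y := by simpa [dist_eq] using abs_re_le_norm (x - y)
  have h2 : |x.im - y.im| ≤ dist x y := by simpa [dist_eq] using abs_im_le_norm (x - y)
  simp only [gridDist, latticeFloor, Int.cast_add, Int.cast_abs, Int.cast_sub]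
  linarith

def IsGridNeighbor (a b : ℤ × ℤ) : Prop := gridDist a b = 1

def OffGrid (z : ℂ) : Prop := ∀ k : ℤ, z.re ≠ k ∧ z.im ≠ k

theorem exists_re_im_of_mem_segment_latticePoint {a b : ℤ × ℤ} {x : ℂ}
    (hx : x ∈ segment ℝ (latticePoint a) (latticePoint b)) :
    ∃ s ∈ Icc (0 : ℝ) 1, x.re = a.1 + s * (b.1 - a.1) ∧ x.im = a.2 + s * (b.2 - a.2) := by
  rw [segment_eq_image'] at hx
  obtain ⟨s, hs, rfl⟩ := hx
  exact ⟨s, hs, by simp, by simp⟩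

theorem floor_eq_min_and_ceil_eq_max {m n : ℤ} (hmn : |m - n| ≤ 1) {s : ℝ} (hs : s ∈ Ioo 0 1) :
    ⌊(m + s * (n - m) : ℝ)⌋ = min m n ∧ ⌈(m + s * (n - m) : ℝ)⌉ = max m n := by
  obtain ⟨hs0, hs1⟩ := hs
  rw [abs_eq_max_neg] at hmn
  rcases (by omega : n = m ∨ n = m + 1 ∨ n = m - 1) with rfl | rfl | rfl
  · simp
  · rw [min_eq_left (by omega), max_eq_right (by omega), Int.floor_eq_iff, Int.ceil_eq_iff]
    push_cast
    constructor <;> constructor <;> linarith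
  · rw [min_eq_right (by omega), max_eq_left (by omega), Int.floor_eq_iff, Int.ceil_eq_iff]
    push_cast
    constructor <;> constructor <;> linarith

theorem mem_segment_latticePoint_cases {a b : ℤ × ℤ} (hab : IsGridNeighbor a b) {x : ℂ}
    (hx : x ∈ segment ℝ (latticePoint a) (latticePoint b)) :
    x = latticePoint a ∨ x = latticePoint b ∨
      (⌊x.re⌋ = min a.1 b.1 ∧ ⌈x.re⌉ = max a.1 b.1 ∧
        ⌊x.im⌋ = min a.2 b.2 ∧ ⌈x.im⌉ = max a.2 b.2) := by
  obtain ⟨s, ⟨hs0, hs1⟩, hre, him⟩ := exists_re_im_of_mem_segment_latticePoint hx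
  rcases hs0.eq_or_lt with rfl | hs0
  · exact Or.inl (Complex.ext (by simp [hre]) (by simp [him]))
  rcases hs1.eq_or_lt with rfl | hs1
  · exact Or.inr (Or.inl (Complex.ext (by simp [hre]) (by simp [him])))
  simp only [IsGridNeighbor, gridDist, abs_eq_max_neg] at hab
  have h1 := floor_eq_min_and_ceil_eq_max (m := a.1) (n := b.1) (abs_le.2 ⟨by omega, by omega⟩)
    ⟨hs0, hs1⟩
  have h2 := floor_eq_min_and_ceil_eq_max (m := a.2) (n := b.2) (abs_le.2 ⟨by omega, by omega⟩)
    ⟨hs0, hs1⟩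
  rw [hre, him]
  exact Or.inr (Or.inr ⟨h1.1, h1.2, h2.1, h2.2⟩)

theorem eq_or_eq_of_latticePoint_mem_segment {a b z : ℤ × ℤ} (hab : IsGridNeighbor a b)
    (hz : latticePoint z ∈ segment ℝ (latticePoint a) (latticePoint b)) : z = a ∨ z = b := by
  rcases mem_segment_latticePoint_cases hab hz with h | h | h
  · exact Or.inl (latticePoint_injective h)
  · exact Or.inr (latticePoint_injective h)
  · simp only [latticePoint_re, latticePoint_im, Int.floor_intCast, Int.ceil_intCast] at h
    simp only [IsGridNeighbor, gridDist, abs_eq_max_neg] at hab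
    omega

-- Off the lattice, the floor and ceiling of the coordinates of `x` recover the edge's endpoints.
theorem mem_inter_segment_latticePoint_cases {a b a' b' : ℤ × ℤ} (hab : IsGridNeighbor a b)
    (hab' : IsGridNeighbor a' b') {x : ℂ} (hx : x ∈ segment ℝ (latticePoint a) (latticePoint b))
    (hx' : x ∈ segment ℝ (latticePoint a') (latticePoint b')) :
    (∃ z, x = latticePoint z) ∨ (a = a' ∧ b = b') ∨ (a = b' ∧ b = a') := by
  rcases mem_segment_latticePoint_cases hab hx with h | h | h
  · exact Or.inl ⟨a, h⟩
  · exact Or.inl ⟨b, h⟩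
  rcases mem_segment_latticePoint_cases hab' hx' with h' | h' | h'
  · exact Or.inl ⟨a', h'⟩
  · exact Or.inl ⟨b', h'⟩
  simp only [IsGridNeighbor, gridDist, abs_eq_max_neg] at hab hab'
  right
  simp only [Prod.ext_iff]
  omega

theorem not_offGrid_of_mem_segment {a b : ℤ × ℤ} (hab : IsGridNeighbor a b) {x : ℂ}
    (hx : x ∈ segment ℝ (latticePoint a) (latticePoint b)) : ¬ OffGrid x := by
  obtain ⟨s, -, hre, him⟩ := exists_re_im_of_mem_segment_latticePoint hx
  simp only [IsGridNeighbor, gridDist, abs_eq_max_neg] at hab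
  rcases (by omega : a.1 = b.1 ∨ a.2 = b.2) with h | h
  · exact fun hoff => (hoff a.1).1 (by simp [hre, h])
  · exact fun hoff => (hoff a.2).2 (by simp [him, h])

theorem add_mul_floor_sub_ne_intCast {r : ℝ} (hr : ∀ k : ℤ, r ≠ k) {t : ℝ} (ht0 : 0 ≤ t)
    (ht1 : t < 1) (k : ℤ) : r + t * (⌊r⌋ - r) ≠ k := by
  intro h
  have hfloor : (⌊r⌋ : ℝ) < r := (Int.floor_le r).lt_of_ne fun h' => hr _ h'.symm
  have hlow : (⌊r⌋ : ℝ) < k := by nlinarith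
  have hhigh : (k : ℝ) < ⌊r⌋ + 1 := by nlinarith [Int.lt_floor_add_one r]
  norm_cast at hlow hhigh
  omega

theorem offGrid_of_mem_segment_latticeFloor {z x : ℂ} (hz : OffGrid z)
    (hx : x ∈ segment ℝ z (latticePoint (latticeFloor z)))
    (hne : x ≠ latticePoint (latticeFloor z)) : OffGrid x := by
  rw [segment_eq_image'] at hx
  obtain ⟨t, ⟨ht0, ht1⟩, rfl⟩ := hx
  have ht1' : t < 1 := ht1.lt_of_ne fun h => hne (by simp [h])
  intro k
  simp only [add_re, add_im, real_smul, mul_re, mul_im, ofReal_re, ofReal_im, sub_re, sub_im,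
    latticePoint_re, latticePoint_im, latticeFloor, zero_mul, sub_zero, add_zero]
  exact ⟨add_mul_floor_sub_ne_intCast (fun k => (hz k).1) ht0 ht1' k,
    add_mul_floor_sub_ne_intCast (fun k => (hz k).2) ht0 ht1' k⟩

theorem eq_latticePoint_latticeFloor_of_mem_segment {z x : ℂ} (hz : OffGrid z) {a b : ℤ × ℤ}
    (hab : IsGridNeighbor a b) (hx : x ∈ segment ℝ z (latticePoint (latticeFloor z)))
    (hx' : x ∈ segment ℝ (latticePoint a) (latticePoint b)) :
    x = latticePoint (latticeFloor z) := by
  by_contra hne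
  exact not_offGrid_of_mem_segment hab hx' (offGrid_of_mem_segment_latticeFloor hz hx hne)

theorem OffGrid.ne_latticePoint {z : ℂ} (hz : OffGrid z) (a : ℤ × ℤ) : z ≠ latticePoint a :=
  fun h => (hz a.1).1 (by simp [h])

theorem gridDist_comm (a b : ℤ × ℤ) : gridDist a b = gridDist b a := by
  simp [gridDist, abs_sub_comm]

def gridGraph (V : Set ℂ) : SimpleGraph (ℤ × ℤ) where
  Adj a b := IsGridNeighbor a b ∧ segment ℝ (latticePoint a) (latticePoint b) ⊆ V
  symm.symm a b h :=
    ⟨(gridDist_comm b a).trans h.1, segment_symm ℝ (latticePoint b) (latticePoint a) ▸ h.2⟩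
  loopless.irrefl a h := by simp [IsGridNeighbor, gridDist] at h

theorem exists_isGridNeighbor_gridDist_eq {a b : ℤ × ℤ} {N : ℕ} (h : gridDist a b = N + 1) :
    ∃ b', IsGridNeighbor b' b ∧ gridDist a b' = N := by
  simp only [IsGridNeighbor, gridDist, abs_eq_max_neg] at *
  rcases lt_trichotomy b.1 a.1 with h1 | h1 | h1
  · exact ⟨(b.1 + 1, b.2), by dsimp; omega, by dsimp; omega⟩
  · rcases lt_trichotomy b.2 a.2 with h2 | h2 | h2
    · exact ⟨(b.1, b.2 + 1), by dsimp; omega, by dsimp; omega⟩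
    · omega
    · exact ⟨(b.1, b.2 - 1), by dsimp; omega, by dsimp; omega⟩
  · exact ⟨(b.1 - 1, b.2), by dsimp; omega, by dsimp; omega⟩

theorem gridGraph_reachable_of_closedBall_subset {V : Set ℂ} {a b : ℤ × ℤ} {r : ℝ}
    (hV : closedBall (latticePoint a) r ⊆ V) (hb : (gridDist a b : ℝ) ≤ r) :
    (gridGraph V).Reachable a b := by
  obtain ⟨N, hN⟩ : ∃ N : ℕ, gridDist a b = N := ⟨_, (Int.toNat_of_nonneg (by
    unfold gridDist; positivity)).symm⟩
  induction N generalizing b with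
  | zero =>
    obtain rfl : b = a := by simp only [gridDist, abs_eq_max_neg] at hN; ext <;> omega
    rfl
  | succ N ih =>
    obtain ⟨b', hb'b, hab'⟩ := exists_isGridNeighbor_gridDist_eq hN
    have hN' : (N : ℝ) + 1 ≤ r := by rw [hN] at hb; exact_mod_cast hb
    have hmem : ∀ c, (gridDist a c : ℝ) ≤ r → latticePoint c ∈ closedBall (latticePoint a) r :=
      fun c hc => mem_closedBall.2 (by rw [dist_comm]; exact (dist_latticePoint_le a c).trans hc)
    have hb'r : (gridDist a b' : ℝ) ≤ r := by rw [hab']; push_cast; linarith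
    refine (ih hb'r hab').trans (SimpleGraph.Adj.reachable (G := gridGraph V) ⟨hb'b, ?_⟩)
    exact ((convex_closedBall _ _).segment_subset (hmem b' hb'r) (hmem b hb)).trans hV

theorem gridGraph_reachable_latticeFloor {V : Set ℂ} {x y : ℂ}
    (hV : closedBall x (2 * dist x y + 4) ⊆ V) :
    (gridGraph V).Reachable (latticeFloor x) (latticeFloor y) := by
  refine gridGraph_reachable_of_closedBall_subset
    ((closedBall_subset_closedBall' ?_).trans hV) le_rfl
  linarith [gridDist_latticeFloor_le x y, dist_comm x (latticePoint (latticeFloor x)) ▸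
    dist_latticePoint_latticeFloor_lt x]

theorem segment_latticeFloor_subset_closedBall (z : ℂ) :
    segment ℝ z (latticePoint (latticeFloor z)) ⊆ closedBall z 2 :=
  (convex_closedBall z 2).segment_subset (mem_closedBall_self zero_le_two)
    (mem_closedBall.2 (dist_comm z _ ▸ (dist_latticePoint_latticeFloor_lt z).le))

theorem disjoint_segment_latticeFloor {z w : ℂ} (hzw : 4 < dist z w) :
    Disjoint (segment ℝ z (latticePoint (latticeFloor z)))
      (segment ℝ (latticePoint (latticeFloor w)) w) := by
  refine disjoint_left.2 fun x hxz hxw => ?_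
  have hz := mem_closedBall.1 (segment_latticeFloor_subset_closedBall z hxz)
  have hw := mem_closedBall.1 (segment_latticeFloor_subset_closedBall w (segment_symm ℝ _ w ▸ hxw))
  linarith [dist_triangle_left z w x]

noncomputable def gridChain (z w : ℂ) (u : ℕ → ℤ × ℤ) (M i : ℕ) : ℂ :=
  if i = 0 then z else if i ≤ M + 1 then latticePoint (u (i - 1)) else w

section gridChain

variable {z w : ℂ} {u : ℕ → ℤ × ℤ} {M : ℕ}

@[simp] theorem gridChain_zero : gridChain z w u M 0 = z := rfl

theorem gridChain_succ {i : ℕ} (hi : i ≤ M) : gridChain z w u M (i + 1) = latticePoint (u i) := by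
  simp [gridChain, hi]

@[simp] theorem gridChain_last : gridChain z w u M (M + 2) = w := by simp [gridChain]

theorem gridChain_ne_succ (hz : OffGrid z) (hw : OffGrid w)
    (hinj : ∀ k ≤ M, ∀ l ≤ M, u k = u l → k = l) {i : ℕ} (hi : i < M + 2) :
    gridChain z w u M i ≠ gridChain z w u M (i + 1) := by
  rcases i with _ | k
  · rw [gridChain_zero, gridChain_succ (Nat.zero_le M)]
    exact hz.ne_latticePoint _
  rcases (by omega : k < M ∨ k = M) with hk | rfl
  · rw [gridChain_succ hk.le, gridChain_succ hk]
    exact fun h => (by omega : k ≠ k + 1) (hinj k hk.le (k + 1) hk (latticePoint_injective h))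
  · rw [gridChain_succ le_rfl, gridChain_last]
    exact (hw.ne_latticePoint _).symm

theorem gridChain_segment_inter_subset (hz : OffGrid z) (hw : OffGrid w) (hzw : 4 < dist z w)
    (hu0 : u 0 = latticeFloor z) (huM : u M = latticeFloor w)
    (hadj : ∀ k < M, IsGridNeighbor (u k) (u (k + 1)))
    (hinj : ∀ k ≤ M, ∀ l ≤ M, u k = u l → k = l) {i j : ℕ} (hij : i < j) (hj : j < M + 2) :
    segment ℝ (gridChain z w u M i) (gridChain z w u M (i + 1)) ∩
      segment ℝ (gridChain z w u M j) (gridChain z w u M (j + 1)) ⊆ {gridChain z w u M j} := by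
  rintro x ⟨hxi, hxj⟩
  obtain ⟨l, rfl⟩ : ∃ l, j = l + 1 := ⟨j - 1, by omega⟩
  rw [mem_singleton_iff]
  rcases (by omega : l < M ∨ l = M) with hl | rfl
  · rw [gridChain_succ hl.le, gridChain_succ hl] at hxj
    rw [gridChain_succ hl.le]
    rcases i with _ | k
    · rw [gridChain_zero, gridChain_succ (Nat.zero_le M), hu0] at hxi
      have hx := eq_latticePoint_latticeFloor_of_mem_segment hz (hadj l hl) hxi hxj
      rw [hx, ← hu0] at hxj ⊢
      rcases eq_or_eq_of_latticePoint_mem_segment (hadj l hl) hxj with h | h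
      · rw [hinj 0 (Nat.zero_le M) l hl.le h]
      · exact absurd (hinj 0 (Nat.zero_le M) (l + 1) hl h) (by omega)
    have hk : k < M := by omega
    rw [gridChain_succ hk.le, gridChain_succ hk] at hxi
    rcases mem_inter_segment_latticePoint_cases (hadj k hk) (hadj l hl) hxi hxj with
      ⟨c, rfl⟩ | ⟨h, -⟩ | ⟨h, -⟩
    · rcases eq_or_eq_of_latticePoint_mem_segment (hadj l hl) hxj with h | h
      · rw [h]
      rcases eq_or_eq_of_latticePoint_mem_segment (hadj k hk) hxi with h' | h' <;>
        have := hinj _ (by omega) _ (by omega) (h'.symm.trans h) <;> omega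
    · exact absurd (hinj k hk.le l hl.le h) (by omega)
    · exact absurd (hinj k hk.le (l + 1) hl h) (by omega)
  · rw [gridChain_succ le_rfl, gridChain_last, huM] at hxj
    rw [gridChain_succ le_rfl, huM]
    rcases i with _ | k
    · rw [gridChain_zero, gridChain_succ (Nat.zero_le _), hu0] at hxi
      exact absurd hxj (disjoint_left.1 (disjoint_segment_latticeFloor hzw) hxi)
    have hk : k < l := by omega
    rw [gridChain_succ hk.le, gridChain_succ hk] at hxi
    exact eq_latticePoint_latticeFloor_of_mem_segment hw (hadj k hk) (segment_symm ℝ _ w ▸ hxj) hxi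

end gridChain

theorem exists_gridChain {V : Set ℂ} {z w : ℂ} (hz : OffGrid z) (hw : OffGrid w)
    (hzw : 4 < dist z w) (hzV : closedBall z 2 ⊆ V) (hwV : closedBall w 2 ⊆ V)
    (h : (gridGraph V).Reachable (latticeFloor z) (latticeFloor w)) :
    ∃ (n : ℕ) (v : ℕ → ℂ), 0 < n ∧ v 0 = z ∧ v n = w ∧
      (∀ i, 0 < i → i < n → ∃ a, v i = latticePoint a) ∧
      (∀ i < n, dist (v i) (v (i + 1)) < 2 ∧ segment ℝ (v i) (v (i + 1)) ⊆ V) ∧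
      IsSimpleChain n v := by
  classical
  obtain ⟨W⟩ := h
  set P := W.toPath
  set u := P.1.getVert
  set M := P.1.length
  have hu0 : u 0 = latticeFloor z := P.1.getVert_zero
  have huM : u M = latticeFloor w := P.1.getVert_length
  have hadj : ∀ k < M, (gridGraph V).Adj (u k) (u (k + 1)) := fun k hk => P.1.adj_getVert_succ hk
  have hinj : ∀ k ≤ M, ∀ l ≤ M, u k = u l → k = l := fun k hk l hl h => P.2.getVert_injOn hk hl h
  refine ⟨M + 2, gridChain z w u M, by omega, rfl, gridChain_last, fun i hi0 hi => ?_,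
    fun i hi => ?_, fun i hi => gridChain_ne_succ hz hw hinj hi, fun i j hij hj =>
      gridChain_segment_inter_subset hz hw hzw hu0 huM (fun k hk => (hadj k hk).1) hinj hij hj⟩
  · obtain ⟨k, rfl⟩ : ∃ k, i = k + 1 := ⟨i - 1, by omega⟩
    exact ⟨u k, gridChain_succ (by omega)⟩
  rcases i with _ | k
  · rw [gridChain_zero, gridChain_succ (Nat.zero_le M), hu0]
    exact ⟨dist_latticePoint_latticeFloor_lt z,
      (segment_latticeFloor_subset_closedBall z).trans hzV⟩
  rcases (by omega : k < M ∨ k = M) with hk | rfl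
  · rw [gridChain_succ hk.le, gridChain_succ hk]
    refine ⟨(dist_latticePoint_le _ _).trans_lt ?_, (hadj k hk).2⟩
    rw [(hadj k hk).1]
    norm_num
  · rw [gridChain_succ le_rfl, gridChain_last, huM, dist_comm, segment_symm]
    exact ⟨dist_latticePoint_latticeFloor_lt w,
      (segment_latticeFloor_subset_closedBall w).trans hwV⟩

noncomputable def affineScale (c : ℂ) (δ : ℝ) : ℂ →ᵃ[ℝ] ℂ :=
  AffineMap.const ℝ ℂ c + (δ • LinearMap.id : ℂ →ₗ[ℝ] ℂ).toAffineMap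

section affineScale

variable {c : ℂ} {δ : ℝ}

@[simp] theorem affineScale_apply (z : ℂ) : affineScale c δ z = c + δ * z := by
  simp [affineScale, real_smul]

theorem affineScale_div (hδ : δ ≠ 0) (x : ℂ) : affineScale c δ ((x - c) / δ) = x := by
  rw [affineScale_apply, mul_div_cancel₀ _ (ofReal_ne_zero.2 hδ), add_sub_cancel]

theorem affineScale_injective (hδ : δ ≠ 0) : Function.Injective (affineScale c δ) := fun z w h => by
  simpa [ofReal_ne_zero.2 hδ] using h

theorem dist_affineScale (hδ : 0 ≤ δ) (z w : ℂ) :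
    dist (affineScale c δ z) (affineScale c δ w) = δ * dist z w := by
  simp [dist_eq, ← mul_sub, abs_of_nonneg hδ]

theorem closedBall_subset_preimage_affineScale (hδ : 0 < δ) {U : Set ℂ} {x : ℂ} {r : ℝ}
    (hU : closedBall x (δ * r) ⊆ U) : closedBall ((x - c) / δ) r ⊆ affineScale c δ ⁻¹' U := by
  intro z hz
  apply hU
  rw [mem_closedBall, ← affineScale_div hδ.ne' x, dist_affineScale hδ.le]
  exact mul_le_mul_of_nonneg_left (mem_closedBall.1 hz) hδ.le

end affineScale

-- Quantifying over all fine meshes and all offsets makes the relation transitive and leaves the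
-- choice of a rational grid to the end.
def FineGridReachable (U : Set ℂ) (x y : ℂ) : Prop :=
  ∃ δ₀ > 0, ∀ δ, 0 < δ → δ < δ₀ → ∀ c : ℂ, (gridGraph (affineScale c δ ⁻¹' U)).Reachable
    (latticeFloor ((x - c) / δ)) (latticeFloor ((y - c) / δ))

namespace FineGridReachable

variable {U : Set ℂ} {x y z : ℂ}

theorem symm (h : FineGridReachable U x y) : FineGridReachable U y x :=
  let ⟨δ₀, hδ₀, h⟩ := h
  ⟨δ₀, hδ₀, fun δ hδ hδ' c => (h δ hδ hδ' c).symm⟩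

theorem trans (hxy : FineGridReachable U x y) (hyz : FineGridReachable U y z) :
    FineGridReachable U x z := by
  obtain ⟨δ₁, hδ₁, h₁⟩ := hxy
  obtain ⟨δ₂, hδ₂, h₂⟩ := hyz
  exact ⟨min δ₁ δ₂, lt_min hδ₁ hδ₂, fun δ hδ hδ' c =>
    (h₁ δ hδ (hδ'.trans_le (min_le_left _ _)) c).trans
      (h₂ δ hδ (hδ'.trans_le (min_le_right _ _)) c)⟩

theorem of_ball_subset {R : ℝ} (hR : 0 < R) (hU : ball x R ⊆ U) (hy : dist y x < R / 4) :
    FineGridReachable U x y := by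
  refine ⟨R / 8, by positivity, fun δ hδ hδR c => gridGraph_reachable_latticeFloor
    (closedBall_subset_preimage_affineScale hδ ((closedBall_subset_ball ?_).trans hU))⟩
  have hdist : δ * dist ((x - c) / δ) ((y - c) / δ) = dist x y := by
    rw [← dist_affineScale hδ.le, affineScale_div hδ.ne', affineScale_div hδ.ne']
  rw [dist_comm] at hy
  nlinarith

end FineGridReachable

theorem IsPreconnected.fineGridReachable {U : Set ℂ} (hUc : IsPreconnected U) (hU : IsOpen U)
    {p q : ℂ} (hp : p ∈ U) (hq : q ∈ U) : FineGridReachable U p q := by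
  refine hUc.induction₂' (FineGridReachable U) (fun x hx => ?_)
    (fun _ _ _ _ _ _ => FineGridReachable.trans) hp hq
  obtain ⟨R, hR, hxR⟩ := Metric.isOpen_iff.1 hU x hx
  filter_upwards [mem_nhdsWithin_of_mem_nhds (ball_mem_nhds x (by positivity : 0 < R / 4))]
    with y hy
  have h := FineGridReachable.of_ball_subset hR hxR hy
  exact ⟨h, h.symm⟩

theorem ne_intCast_of_mem_Ioo {t : ℝ} (h0 : 0 < t) (h1 : t < 1) (k : ℤ) : t ≠ k := by
  rintro rfl
  norm_cast at h0 h1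
  omega

theorem exists_rat_forall_div_ne_intCast (x y : ℝ) {δ : ℝ} (hδ : 0 < δ) :
    ∃ c : ℚ, ∀ k : ℤ, (x - c) / δ ≠ k ∧ (y - c) / δ ≠ k := by
  -- Every `c ∈ (x - δ, x)` works for `x`; of two such `c`, at most one fails for `y`.
  have hx : ∀ c : ℝ, x - δ < c → c < x → ∀ k : ℤ, (x - c) / δ ≠ k := fun c hc hc' =>
    ne_intCast_of_mem_Ioo (div_pos (by linarith) hδ) ((div_lt_one hδ).2 (by linarith))
  obtain ⟨r₁, hr₁, hr₁'⟩ := exists_rat_btwn (by linarith : x - δ < x)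
  obtain ⟨r₂, hr₂, hr₂'⟩ := exists_rat_btwn hr₁'
  by_cases hy : ∀ k : ℤ, (y - r₁) / δ ≠ k
  · exact ⟨r₁, fun k => ⟨hx r₁ hr₁ hr₁' k, hy k⟩⟩
  push Not at hy
  obtain ⟨k₁, hk₁⟩ := hy
  refine ⟨r₂, fun k => ⟨hx r₂ (hr₁.trans hr₂) hr₂' k, fun hk => ?_⟩⟩
  refine ne_intCast_of_mem_Ioo (t := (r₂ - r₁) / δ) (div_pos (by linarith) hδ)
    ((div_lt_one hδ).2 (by linarith)) (k₁ - k) ?_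
  rw [show ((r₂ : ℝ) - r₁) / δ = (y - r₁) / δ - (y - r₂) / δ by ring, hk₁, hk]
  push_cast
  ring

theorem exists_rat_offGrid (p q : ℂ) {δ : ℝ} (hδ : 0 < δ) :
    ∃ c₁ c₂ : ℚ, OffGrid ((p - (c₁ + c₂ * I)) / δ) ∧ OffGrid ((q - (c₁ + c₂ * I)) / δ) := by
  obtain ⟨c₁, hc₁⟩ := exists_rat_forall_div_ne_intCast p.re q.re hδ
  obtain ⟨c₂, hc₂⟩ := exists_rat_forall_div_ne_intCast p.im q.im hδ
  exact ⟨c₁, c₂, fun k => ⟨by simpa using (hc₁ k).1, by simpa using (hc₂ k).1⟩,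
    fun k => ⟨by simpa using (hc₁ k).2, by simpa using (hc₂ k).2⟩⟩

theorem exists_simpleChain_of_reachable {U : Set ℂ} {p q c : ℂ} {δ : ℝ} (hδ : 0 < δ)
    (hp : OffGrid ((p - c) / δ)) (hq : OffGrid ((q - c) / δ)) (hpq : 4 * δ < dist p q)
    (hpU : closedBall p (δ * 2) ⊆ U) (hqU : closedBall q (δ * 2) ⊆ U)
    (hreach : (gridGraph (affineScale c δ ⁻¹' U)).Reachable (latticeFloor ((p - c) / δ))
      (latticeFloor ((q - c) / δ))) :
    ∃ (n : ℕ) (v : ℕ → ℂ), 0 < n ∧ v 0 = p ∧ v n = q ∧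
      (∀ i, 0 < i → i < n → ∃ a, v i = affineScale c δ (latticePoint a)) ∧
      (∀ i < n, dist (v i) (v (i + 1)) < 2 * δ ∧ segment ℝ (v i) (v (i + 1)) ⊆ U) ∧
      IsSimpleChain n v := by
  have hdist : dist p q = δ * dist ((p - c) / δ) ((q - c) / δ) := by
    rw [← dist_affineScale hδ.le, affineScale_div hδ.ne', affineScale_div hδ.ne']
  obtain ⟨n, v, hn, hv0, hvn, hlat, hstep, hchain⟩ := exists_gridChain hp hq
    (by nlinarith) (closedBall_subset_preimage_affineScale hδ hpU)
    (closedBall_subset_preimage_affineScale hδ hqU) hreach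
  refine ⟨n, affineScale c δ ∘ v, hn, by simp [hv0, affineScale_div hδ.ne'],
    by simp [hvn, affineScale_div hδ.ne'], fun i hi0 hi => ?_, fun i hi => ?_,
    hchain.map _ (affineScale_injective hδ.ne')⟩
  · obtain ⟨a, ha⟩ := hlat i hi0 hi
    exact ⟨a, by simp [ha]⟩
  · obtain ⟨hd, hs⟩ := hstep i hi
    refine ⟨?_, ?_⟩
    · rw [Function.comp_apply, Function.comp_apply, dist_affineScale hδ.le]
      nlinarith
    · rw [Function.comp_apply, Function.comp_apply, ← image_segment]
      exact image_subset_iff.2 hs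

theorem isRationalPoint_affineScale_latticePoint (c₁ c₂ δ : ℚ) (a : ℤ × ℤ) :
    IsRationalPoint (affineScale (c₁ + c₂ * I) δ (latticePoint a)) :=
  ⟨⟨c₁ + δ * a.1, by simp⟩, ⟨c₂ + δ * a.2, by simp⟩⟩

theorem polygonal_arc_in_domain (U : Set ℂ) (hU : IsOpen U) (hUc : IsConnected U)
    (p q : ℂ) (hp : p ∈ U) (hq : q ∈ U) (hpq : p ≠ q) (ε : ℝ) (hε : 0 < ε) :
    ∃ (n : ℕ) (v : ℕ → ℂ) (P : Set ℂ),
      0 < n ∧ v 0 = p ∧ v n = q ∧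
      (∀ i, 0 < i → i < n → IsRationalPoint (v i)) ∧
      (∀ i < n, dist (v i) (v (i + 1)) < ε) ∧
      P = ⋃ i ∈ Finset.range n, segment ℝ (v i) (v (i + 1)) ∧
      ArcFrom p q P ∧ P ⊆ U := by
  obtain ⟨δ₀, hδ₀, hreach⟩ := hUc.isPreconnected.fineGridReachable hU hp hq
  obtain ⟨Rp, hRp, hpU⟩ := Metric.isOpen_iff.1 hU p hp
  obtain ⟨Rq, hRq, hqU⟩ := Metric.isOpen_iff.1 hU q hq
  have hpq' : 0 < dist p q := dist_pos.2 hpq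
  obtain ⟨δ, hδ, hδ'⟩ := exists_rat_btwn (show (0 : ℝ) < min (min δ₀ (ε / 2))
    (min (dist p q / 4) (min (Rp / 2) (Rq / 2))) by positivity)
  simp only [lt_min_iff] at hδ'
  obtain ⟨c₁, c₂, hpc, hqc⟩ := exists_rat_offGrid p q hδ
  obtain ⟨n, v, hn, hv0, hvn, hlat, hstep, hchain⟩ :=
    exists_simpleChain_of_reachable hδ hpc hqc (by linarith)
      ((closedBall_subset_ball (by linarith)).trans hpU)
      ((closedBall_subset_ball (by linarith)).trans hqU) (hreach δ hδ hδ'.1.1 _)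
  refine ⟨n, v, _, hn, hv0, hvn, fun i hi0 hi => ?_,
    fun i hi => (hstep i hi).1.trans (by linarith), rfl,
    hv0 ▸ hvn ▸ arcFrom_iUnion_segment hn hchain,
    iUnion₂_subset fun i hi => (hstep i (Finset.mem_range.1 hi)).2⟩
  obtain ⟨a, ha⟩ := hlat i hi0 hi
  exact ha ▸ isRationalPoint_affineScale_latticePoint c₁ c₂ δ a
end

section
/- Every ULAC function for a set X ⊆ ℂ is a CIK function for X. -/
/-- `g` is a ULAC function for `X`. -/
def IsULAC (X : Set ℂ) (g : ℕ → ℕ) : Prop :=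
  ∀ k : ℕ, ∀ z₀ ∈ X, ∀ z₁ ∈ X, z₀ ≠ z₁ →
    ‖z₀ - z₁‖ ≤ (2:ℝ) ^ (-(g k : ℤ)) →
    ∃ A : Set ℂ, A ⊆ X ∧ ArcFrom z₀ z₁ A ∧ Metric.diam A < (2:ℝ) ^ (-(k : ℤ))

/-- `g` is a CIK function for `X`. -/
def IsCIK (X : Set ℂ) (g : ℕ → ℕ) : Prop :=
  ∀ k : ℕ, ∀ z₀ ∈ X,
    ∃ C : Set ℂ, IsPreconnected C ∧
      C ⊆ Metric.ball z₀ ((2:ℝ) ^ (-(k : ℤ))) ∩ X ∧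
      Metric.ball z₀ ((2:ℝ) ^ (-(g k : ℤ))) ∩ X ⊆ C

open Metric

theorem Bornology.IsBounded.subset_ball_of_diam_lt {α : Type*} [PseudoMetricSpace α] {s : Set α}
    {x : α} {r : ℝ} (hs : Bornology.IsBounded s) (hx : x ∈ s) (hr : diam s < r) :
    s ⊆ ball x r := fun _ hy ↦
  mem_ball.2 ((dist_le_diam_of_mem hs hy hx).trans_lt hr)

namespace ArcFrom

variable {p q : ℂ} {A : Set ℂ}

theorem left_mem (h : ArcFrom p q A) : p ∈ A := by
  obtain ⟨f, -, -, rfl, hf0, -⟩ := h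
  exact ⟨0, by simp, hf0⟩

theorem right_mem (h : ArcFrom p q A) : q ∈ A := by
  obtain ⟨f, -, -, rfl, -, hf1⟩ := h
  exact ⟨1, by simp, hf1⟩

theorem isCompact (h : ArcFrom p q A) : IsCompact A := by
  obtain ⟨f, hf, -, rfl, -⟩ := h
  exact isCompact_Icc.image_of_continuousOn hf

theorem isPreconnected (h : ArcFrom p q A) : IsPreconnected A := by
  obtain ⟨f, hf, -, rfl, -⟩ := h
  exact isPreconnected_Icc.image f hf

theorem mem_connectedComponentIn {X : Set ℂ} {r : ℝ} (h : ArcFrom p q A) (hAX : A ⊆ X)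
    (hA : diam A < r) : q ∈ connectedComponentIn (ball p r ∩ X) p :=
  h.isPreconnected.subset_connectedComponentIn h.left_mem
    (Set.subset_inter (h.isCompact.isBounded.subset_ball_of_diam_lt h.left_mem hA) hAX)
    h.right_mem

end ArcFrom

theorem ulac_is_cik (X : Set ℂ) (g : ℕ → ℕ) (h : IsULAC X g) : IsCIK X g := by
  intro k z₀ hz₀
  refine ⟨connectedComponentIn (ball z₀ ((2:ℝ) ^ (-(k : ℤ))) ∩ X) z₀,
    isPreconnected_connectedComponentIn, connectedComponentIn_subset _ _, ?_⟩
  rintro z ⟨hz, hzX⟩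
  obtain rfl | hne := eq_or_ne z₀ z
  · exact mem_connectedComponentIn ⟨mem_ball_self (by positivity), hz₀⟩
  have hclose : ‖z₀ - z‖ ≤ (2:ℝ) ^ (-(g k : ℤ)) := by
    rw [← dist_eq_norm]
    exact (mem_ball'.1 hz).le
  obtain ⟨A, hAX, hArc, hdiam⟩ := h k z₀ hz₀ z hzX hne hclose
  exact hArc.mem_connectedComponentIn hAX hdiam
end

section
/- If A ⊆ ℂ is an arc, then the complement ℂ \ A is connected. -/
/-!
If `z₀ ∉ A`, then `z ↦ z - z₀` has a continuous logarithm on the arc `A` (lift it along the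
parametrisation, whose domain is contractible), and by Tietze this logarithm extends to a
continuous `Λ : ℂ → ℂ`. If the component `U` of `z₀` in `Aᶜ` were bounded, gluing `exp ∘ Λ` on
`closure U` to `z - z₀` outside (they agree on `frontier U ⊆ A`) would give a nonvanishing
continuous function on the simply connected plane, hence one with a continuous logarithm; on a
circle around `z₀` enclosing `U` this would be a continuous logarithm of `z - z₀`, which does not
exist. So every component of `Aᶜ` is unbounded, hence meets the connected exterior of a disc
containing `A`, and they all coincide.
-/

open Complex Set Metric Bornology Topology
open scoped Real

/-- `A` is an arc: the image of a continuous injection from `[0,1]` into `ℂ`. -/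
def IsArc (A : Set ℂ) : Prop :=
  ∃ f : ℝ → ℂ, ContinuousOn f (Set.Icc 0 1) ∧ Set.InjOn f (Set.Icc 0 1) ∧
    f '' Set.Icc 0 1 = A

theorem frontier_connectedComponentIn_subset_compl {α : Type*} [TopologicalSpace α]
    [LocallyConnectedSpace α] {F : Set α} (hF : IsOpen F) (x : α) :
    frontier (connectedComponentIn F x) ⊆ Fᶜ := by
  intro y hy hyF
  rw [hF.connectedComponentIn.frontier_eq] at hy
  obtain ⟨w, hwy, hwx⟩ := mem_closure_iff.mp hy.1 _ hF.connectedComponentIn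
    (mem_connectedComponentIn hyF)
  rw [connectedComponentIn_eq hwx, ← connectedComponentIn_eq hwy] at hy
  exact hy.2 (mem_connectedComponentIn hyF)

section NormedSpace

variable {E : Type*} [NormedAddCommGroup E] [NormedSpace ℝ E]

theorem isConnected_compl_closedBall (h : 1 < Module.rank ℝ E) (x : E) {r : ℝ} (hr : 0 ≤ r) :
    IsConnected (closedBall x r)ᶜ := by
  have hprod : IsConnected (sphere (0 : E) 1 ×ˢ Ioi r) :=
    (isConnected_sphere h 0 zero_le_one).prod isConnected_Ioi
  convert hprod.image (fun p => x + p.2 • p.1) (by fun_prop)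
  ext y
  simp only [mem_compl_iff, mem_closedBall, not_le, mem_image, mem_prod, mem_sphere_zero_iff_norm,
    mem_Ioi, Prod.exists]
  constructor
  · intro hy
    have hd : dist y x ≠ 0 := (hr.trans_lt hy).ne'
    refine ⟨(dist y x)⁻¹ • (y - x), dist y x, ⟨?_, hy⟩, ?_⟩
    · rw [norm_smul, ← dist_eq_norm, norm_inv, Real.norm_of_nonneg dist_nonneg, inv_mul_cancel₀ hd]
    · rw [smul_smul, mul_inv_cancel₀ hd, one_smul, add_sub_cancel]
  · rintro ⟨u, s, ⟨hu, hs⟩, rfl⟩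
    rwa [dist_eq_norm, add_sub_cancel_left, norm_smul, hu, mul_one,
      Real.norm_of_nonneg (hr.trans hs.le)]

theorem Bornology.IsBounded.isConnected_compl (h : 1 < Module.rank ℝ E) {K : Set E}
    (hK : IsBounded K) (hcomp : ∀ z ∈ Kᶜ, ¬ IsBounded (connectedComponentIn Kᶜ z)) :
    IsConnected Kᶜ := by
  obtain ⟨r, hr, hKr⟩ := hK.subset_closedBall_lt 0 0
  have hS := isConnected_compl_closedBall h 0 hr.le
  have hSK : (closedBall 0 r)ᶜ ⊆ Kᶜ := compl_subset_compl.mpr hKr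
  obtain ⟨w, hw⟩ := hS.nonempty
  have hw_mem : ∀ z ∈ Kᶜ, w ∈ connectedComponentIn Kᶜ z := by
    intro z hz
    obtain ⟨v, hvz, hvS⟩ := not_subset.mp fun hsub => hcomp z hz (isBounded_closedBall.subset hsub)
    rw [connectedComponentIn_eq hvz]
    exact hS.isPreconnected.subset_connectedComponentIn hvS hSK hw
  refine ⟨⟨w, hSK hw⟩, isPreconnected_of_forall w fun z hz => ?_⟩
  exact ⟨_, connectedComponentIn_subset _ _, hw_mem z hz, mem_connectedComponentIn hz,
    isPreconnected_connectedComponentIn⟩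

end NormedSpace

namespace Complex

theorem exists_continuous_exp_comp_eq {X : Type*} [TopologicalSpace X] [SimplyConnectedSpace X]
    [LocallyPathConnectedSpace X] {g : X → ℂ} (hg : Continuous g) (hg₀ : ∀ x, g x ≠ 0) :
    ∃ f : X → ℂ, Continuous f ∧ exp ∘ f = g := by
  obtain ⟨x₀⟩ : Nonempty X := inferInstance
  obtain ⟨f, ⟨-, hf⟩, -⟩ := isCoveringMapOn_exp.existsUnique_continuousMap_lifts ⟨g, hg⟩
    (exp_log (hg₀ x₀)) hg₀
  exact ⟨f, f.continuous, hf⟩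

theorem not_eqOn_exp_comp_sub_sphere {c : ℂ} {R : ℝ} (hR : 0 < R) {L : ℂ → ℂ}
    (hL : ContinuousOn L (sphere c R)) : ¬ EqOn (exp ∘ L) (· - c) (sphere c R) := by
  intro hexp
  have hmem : ∀ t, circleMap c R t ∈ sphere c R := circleMap_mem_sphere c hR.le
  set φ : ℝ → ℂ := fun t => L (circleMap c R t) - t * I
  have hφ : Continuous φ :=
    (hL.comp_continuous (continuous_circleMap c R) hmem).sub (by fun_prop)
  -- `φ` is a continuous lift of the constant map `R` along the covering map `exp`.
  have hexpφ : ∀ t, exp (φ t) = R := fun t => by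
    have hz : exp (L (circleMap c R t)) = circleMap c R t - c := hexp (hmem t)
    rw [exp_sub, hz, circleMap_sub_center, circleMap_zero, mul_div_cancel_right₀ _ (exp_ne_zero _)]
  have hconst := isCoveringMap_exp.const_of_comp hφ
    (fun t t' => Subtype.ext (by simp only [hexpφ])) (2 * π) 0
  have hper : φ (2 * π) = φ 0 - 2 * π * I := by
    have h2π : circleMap c R (2 * π) = circleMap c R 0 := by
      simpa using periodic_circleMap c R 0
    simp only [φ, h2π]
    push_cast
    ring
  rw [hper, sub_eq_self] at hconst
  simp [Real.pi_ne_zero] at hconst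

theorem not_isBounded_connectedComponentIn_of_eqOn_exp {K : Set ℂ} (hK : IsClosed K) {z₀ : ℂ}
    (hz₀ : z₀ ∉ K) {Λ : ℂ → ℂ} (hΛ : Continuous Λ) (hexp : EqOn (exp ∘ Λ) (· - z₀) K) :
    ¬ IsBounded (connectedComponentIn Kᶜ z₀) := by
  classical
  set U := connectedComponentIn Kᶜ z₀
  intro hU
  have hz₀U : z₀ ∈ U := mem_connectedComponentIn hz₀
  set H : ℂ → ℂ := (closure U).piecewise (exp ∘ Λ) (· - z₀)
  have hH : Continuous H := by
    refine continuous_piecewise (fun z hz => hexp ?_) (by fun_prop) (by fun_prop)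
    simpa using frontier_connectedComponentIn_subset_compl hK.isOpen_compl z₀
      (frontier_closure_subset hz)
  have hH₀ : ∀ z, H z ≠ 0 := by
    intro z
    by_cases hz : z ∈ closure U
    · simp [H, hz, exp_ne_zero]
    · simp only [H, piecewise_eq_of_notMem _ _ _ hz, ne_eq, sub_eq_zero]
      rintro rfl
      exact hz (subset_closure hz₀U)
  obtain ⟨L, hL, hLH⟩ := exists_continuous_exp_comp_eq hH hH₀
  obtain ⟨R, hUR⟩ := hU.closure.subset_ball z₀
  have hR : 0 < R := pos_of_mem_ball (hUR (subset_closure hz₀U))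
  refine not_eqOn_exp_comp_sub_sphere (c := z₀) hR hL.continuousOn fun z hz => ?_
  have hzU : z ∉ closure U := fun h => (mem_sphere.mp hz).not_lt (hUR h)
  exact (congrFun hLH z).trans (piecewise_eq_of_notMem _ _ _ hzU)

end Complex

theorem IsArc.isCompact {A : Set ℂ} (hA : IsArc A) : IsCompact A := by
  obtain ⟨f, hfc, -, rfl⟩ := hA
  exact isCompact_Icc.image_of_continuousOn hfc

theorem IsArc.exists_continuous_eqOn_exp_comp {A : Set ℂ} (hA : IsArc A) {g : ℂ → ℂ}
    (hg : ContinuousOn g A) (hg₀ : ∀ a ∈ A, g a ≠ 0) :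
    ∃ Λ : ℂ → ℂ, Continuous Λ ∧ EqOn (exp ∘ Λ) g A := by
  obtain ⟨f, hfc, hfi, rfl⟩ := hA
  set e : Icc (0 : ℝ) 1 → ℂ := (Icc 0 1).domRestrict f
  have he : IsClosedEmbedding e :=
    hfc.domRestrict.isClosedEmbedding fun s t hst => Subtype.ext (hfi s.2 t.2 hst)
  -- Extending `f` constantly outside `[0, 1]` lets us lift along `exp` over the simply connected
  -- space `ℝ`.
  set γ : ℝ → ℂ := IccExtend zero_le_one e
  have hγ : ∀ t, γ t ∈ f '' Icc 0 1 := fun t => mem_image_of_mem f (projIcc 0 1 _ t).2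
  obtain ⟨ℓ, hℓ, hℓg⟩ := Complex.exists_continuous_exp_comp_eq
    (hg.comp_continuous hfc.domRestrict.Icc_extend' hγ) fun t => hg₀ _ (hγ t)
  obtain ⟨Λ, hΛ⟩ := ContinuousMap.exists_extension' he ⟨(Icc 0 1).domRestrict ℓ, by fun_prop⟩
  refine ⟨Λ, Λ.continuous, ?_⟩
  rintro _ ⟨t, ht, rfl⟩
  have hΛt : Λ (f t) = ℓ t := congrFun hΛ ⟨t, ht⟩
  simpa [hΛt, γ, IccExtend_of_mem _ _ ht] using congrFun hℓg t

theorem complement_of_arc_connected (A : Set ℂ) (hA : IsArc A) :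
    IsConnected Aᶜ := by
  refine hA.isCompact.isBounded.isConnected_compl (by simp [Complex.rank_real_complex])
    fun z₀ hz₀ => ?_
  obtain ⟨Λ, hΛ, hexp⟩ := hA.exists_continuous_eqOn_exp_comp (g := (· - z₀)) (by fun_prop)
    fun a ha => sub_ne_zero.mpr (ne_of_mem_of_not_mem ha hz₀)
  exact not_isBounded_connectedComponentIn_of_eqOn_exp hA.isCompact.isClosed hz₀ hΛ hexp
end

section
/- Let p₁, q₁, p₂, q₂ ∈ ℂ, let P be an arc from p₂ to q₂, let S₁ be the segment from p₁ to p₂ and S₂ the segment from q₂ to q₁, and suppose p₁ ∉ P ∪ S₂, q₁ ∉ P ∪ S₁ and S₁ ∩ S₂ = ∅. Then there exists an arc from p₁ to q₁ contained in P ∪ S₁ ∪ S₂. -/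
open Set

/-- Affine reparametrization of a piece of a curve: a subarc. -/
lemma subarc_exists {F : ℝ → ℂ} (hF : Continuous F) {c d : ℝ} (hcd : c < d)
    (hFi : Set.InjOn F (Set.Icc c d)) :
    ∃ k : ℝ → ℂ, Continuous k ∧ Set.InjOn k (Set.Icc 0 1) ∧
      k '' Set.Icc 0 1 = F '' Set.Icc c d ∧ k 0 = F c ∧ k 1 = F d := by
  have hdc : (0:ℝ) < d - c := by linarith
  set φ : ℝ → ℝ := fun t => c + t * (d - c) with hφ
  have hφinj : Function.Injective φ := by
    intro t₁ t₂ h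
    have : t₁ * (d - c) = t₂ * (d - c) := by simpa [hφ] using h
    exact mul_right_cancel₀ (ne_of_gt hdc) this
  have hφmap : ∀ t ∈ Set.Icc (0:ℝ) 1, φ t ∈ Set.Icc c d := by
    intro t ht
    simp only [hφ, Set.mem_Icc]
    constructor
    · nlinarith [ht.1, ht.2]
    · nlinarith [ht.1, ht.2]
  have hφim : φ '' Set.Icc 0 1 = Set.Icc c d := by
    apply Set.Subset.antisymm
    · rintro x ⟨t, ht, rfl⟩; exact hφmap t ht
    · rintro x ⟨hx1, hx2⟩
      refine ⟨(x - c) / (d - c), ⟨div_nonneg (by linarith) hdc.le, ?_⟩, ?_⟩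
      · rw [div_le_one hdc]; linarith
      · simp only [hφ]; field_simp; ring
  refine ⟨F ∘ φ, hF.comp (continuous_const.add (continuous_id.mul continuous_const)), ?_, ?_, ?_, ?_⟩
  · intro t₁ ht₁ t₂ ht₂ h
    exact hφinj (hFi (hφmap t₁ ht₁) (hφmap t₂ ht₂) h)
  · rw [Set.image_comp, hφim]
  · simp [hφ]
  · simp only [Function.comp_apply, hφ]; congr 1; ring

/-- Concatenation of two injective curves that meet only at the junction point. -/
lemma arc_concat {b : ℂ} {g h : ℝ → ℂ} (hgc : Continuous g) (hhc : Continuous h)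
    (hgi : Set.InjOn g (Set.Icc 0 1)) (hhi : Set.InjOn h (Set.Icc 0 1))
    (hg1 : g 1 = b) (hh0 : h 0 = b)
    (hint : g '' Set.Icc 0 1 ∩ h '' Set.Icc 0 1 ⊆ {b}) :
    ∃ k : ℝ → ℂ, Continuous k ∧ Set.InjOn k (Set.Icc 0 1) ∧
      k '' Set.Icc 0 1 = g '' Set.Icc 0 1 ∪ h '' Set.Icc 0 1 ∧ k 0 = g 0 ∧ k 1 = h 1 := by
  set k : ℝ → ℂ := fun t => if t ≤ 1/2 then g (2*t) else h (2*t - 1) with hk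
  have hmem₁ : ∀ t : ℝ, 0 ≤ t → t ≤ 1/2 → (2*t) ∈ Set.Icc (0:ℝ) 1 :=
    fun t h1 h2 => ⟨by linarith, by linarith⟩
  have hmem₂ : ∀ t : ℝ, t ≤ 1 → ¬ (t ≤ 1/2) → (2*t - 1) ∈ Set.Icc (0:ℝ) 1 :=
    fun t h1 h2 => ⟨by push_neg at h2; linarith, by linarith⟩
  have hkc : Continuous k := by
    apply Continuous.if_le (hgc.comp (continuous_const.mul continuous_id)) (hhc.comp ((continuous_const.mul continuous_id).sub continuous_const))
      continuous_id continuous_const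
    intro x hx
    simp only [id] at hx
    subst hx
    norm_num [hg1, hh0]
  refine ⟨k, hkc, ?_, ?_, ?_, ?_⟩
  · -- injectivity
    intro t₁ ht₁ t₂ ht₂ heq
    simp only [hk] at heq
    by_cases h₁ : t₁ ≤ 1/2 <;> by_cases h₂ : t₂ ≤ 1/2
    · simp only [h₁, h₂, if_true] at heq
      have := hgi (hmem₁ t₁ ht₁.1 h₁) (hmem₁ t₂ ht₂.1 h₂) heq
      linarith
    · simp only [h₁, h₂, if_true, if_false] at heq
      have hb : g (2*t₁) = b := by
        have : g (2*t₁) ∈ g '' Set.Icc 0 1 ∩ h '' Set.Icc 0 1 :=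
          ⟨⟨2*t₁, hmem₁ t₁ ht₁.1 h₁, rfl⟩, ⟨2*t₂ - 1, hmem₂ t₂ ht₂.2 h₂, heq.symm⟩⟩
        exact hint this
      have e1 : (2*t₁ : ℝ) = 1 := by
        have : g (2*t₁) = g 1 := by rw [hb, hg1]
        have := hgi (hmem₁ t₁ ht₁.1 h₁) ⟨zero_le_one, le_refl 1⟩ this
        linarith
      have e2 : (2*t₂ - 1 : ℝ) = 0 := by
        have : h (2*t₂ - 1) = h 0 := by rw [← heq, hb, hh0]
        have := hhi (hmem₂ t₂ ht₂.2 h₂) ⟨le_refl 0, zero_le_one⟩ this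
        linarith
      push_neg at h₂; linarith
    · simp only [h₁, h₂, if_true, if_false] at heq
      have hb : g (2*t₂) = b := by
        have : g (2*t₂) ∈ g '' Set.Icc 0 1 ∩ h '' Set.Icc 0 1 :=
          ⟨⟨2*t₂, hmem₁ t₂ ht₂.1 h₂, rfl⟩, ⟨2*t₁ - 1, hmem₂ t₁ ht₁.2 h₁, heq⟩⟩
        exact hint this
      have e1 : (2*t₂ : ℝ) = 1 := by
        have : g (2*t₂) = g 1 := by rw [hb, hg1]
        have := hgi (hmem₁ t₂ ht₂.1 h₂) ⟨zero_le_one, le_refl 1⟩ this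
        linarith
      have e2 : (2*t₁ - 1 : ℝ) = 0 := by
        have : h (2*t₁ - 1) = h 0 := by rw [heq, hb, hh0]
        have := hhi (hmem₂ t₁ ht₁.2 h₁) ⟨le_refl 0, zero_le_one⟩ this
        linarith
      push_neg at h₁; linarith
    · simp only [h₁, h₂, if_false] at heq
      have := hhi (hmem₂ t₁ ht₁.2 h₁) (hmem₂ t₂ ht₂.2 h₂) heq
      linarith
  · -- image
    apply Set.Subset.antisymm
    · rintro x ⟨t, ht, rfl⟩
      simp only [hk]
      by_cases h₁ : t ≤ 1/2
      · simp only [h₁, if_true]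
        exact Or.inl ⟨2*t, hmem₁ t ht.1 h₁, rfl⟩
      · simp only [h₁, if_false]
        exact Or.inr ⟨2*t - 1, hmem₂ t ht.2 h₁, rfl⟩
    · rintro x (⟨s, hs, rfl⟩ | ⟨s, hs, rfl⟩)
      · refine ⟨s/2, ⟨by linarith [hs.1], by linarith [hs.2]⟩, ?_⟩
        have : s/2 ≤ 1/2 := by linarith [hs.2]
        simp only [hk, this, if_true]
        congr 1; ring
      · by_cases hs0 : s = 0
        · subst hs0
          refine ⟨1/2, ⟨by norm_num, by norm_num⟩, ?_⟩
          simp only [hk]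
          norm_num [hg1, hh0]
        · have hs0' : 0 < s := lt_of_le_of_ne hs.1 (Ne.symm hs0)
          refine ⟨(s+1)/2, ⟨by linarith [hs.1], by linarith [hs.2]⟩, ?_⟩
          have : ¬ ((s+1)/2 ≤ 1/2) := by push_neg; linarith
          simp only [hk, this, if_false]
          congr 1; ring
  · simp [hk]
  · have : ¬ ((1:ℝ) ≤ 1/2) := by norm_num
    simp only [hk, this, if_false]
    norm_num

theorem arc_through_segments (p₁ p₂ q₁ q₂ : ℂ) (P : Set ℂ)
    (hP : ArcFrom p₂ q₂ P)
    (hp₁ : p₁ ∉ P ∪ segment ℝ q₂ q₁)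
    (hq₁ : q₁ ∉ P ∪ segment ℝ p₁ p₂)
    (hdisj : segment ℝ p₁ p₂ ∩ segment ℝ q₂ q₁ = ∅) :
    ∃ σ : Set ℂ, ArcFrom p₁ q₁ σ ∧
      σ ⊆ P ∪ segment ℝ p₁ p₂ ∪ segment ℝ q₂ q₁ := by
  obtain ⟨f, hfc, hfi, hfim, hf0, hf1⟩ := hP
  -- extend f to a globally continuous function F agreeing with f on [0,1]
  set F : ℝ → ℂ := Set.IccExtend zero_le_one ((Set.Icc (0:ℝ) 1).restrict f) with hF
  have hFeq : ∀ x ∈ Set.Icc (0:ℝ) 1, F x = f x := by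
    intro x hx
    simp only [hF, Set.IccExtend_of_mem zero_le_one _ hx, Set.restrict_apply]; rfl
  have hFc : Continuous F := (hfc.restrict).Icc_extend'
  have hFi : Set.InjOn F (Set.Icc 0 1) := by
    intro x hx y hy hxy
    exact hfi hx hy (by rw [← hFeq x hx, ← hFeq y hy]; exact hxy)
  have hFim : F '' Set.Icc 0 1 = P := by
    rw [← hfim]; exact Set.image_congr hFeq
  have hF0 : F 0 = p₂ := by rw [hFeq 0 ⟨le_refl 0, zero_le_one⟩, hf0]
  have hF1 : F 1 = q₂ := by rw [hFeq 1 ⟨zero_le_one, le_refl 1⟩, hf1]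
  -- basic membership facts
  have hp₂P : p₂ ∈ P := by rw [← hFim]; exact ⟨0, ⟨le_refl 0, zero_le_one⟩, hF0⟩
  have hq₂P : q₂ ∈ P := by rw [← hFim]; exact ⟨1, ⟨zero_le_one, le_refl 1⟩, hF1⟩
  have hp₁P : p₁ ∉ P := fun h => hp₁ (Or.inl h)
  have hp₁S₂ : p₁ ∉ segment ℝ q₂ q₁ := fun h => hp₁ (Or.inr h)
  have hq₁P : q₁ ∉ P := fun h => hq₁ (Or.inl h)
  have hq₁S₁ : q₁ ∉ segment ℝ p₁ p₂ := fun h => hq₁ (Or.inr h)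
  have hp₁p₂ : p₁ ≠ p₂ := fun h => hp₁P (h ▸ hp₂P)
  have hq₂q₁ : q₂ ≠ q₁ := fun h => hq₁P (h ▸ hq₂P)
  have hdisj' : ∀ x, x ∈ segment ℝ p₁ p₂ → x ∈ segment ℝ q₂ q₁ → False := by
    intro x h1 h2
    have : x ∈ segment ℝ p₁ p₂ ∩ segment ℝ q₂ q₁ := ⟨h1, h2⟩
    rw [hdisj] at this
    exact this
  -- parametrize the two segments
  set g : ℝ → ℂ := fun t => p₁ + t • (p₂ - p₁) with hg
  set h : ℝ → ℂ := fun t => q₂ + t • (q₁ - q₂) with hh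
  have hgc : Continuous g := continuous_const.add (continuous_id.smul continuous_const)
  have hhc : Continuous h := continuous_const.add (continuous_id.smul continuous_const)
  have hgim : g '' Set.Icc 0 1 = segment ℝ p₁ p₂ := (segment_eq_image' ℝ p₁ p₂).symm
  have hhim : h '' Set.Icc 0 1 = segment ℝ q₂ q₁ := (segment_eq_image' ℝ q₂ q₁).symm
  have hginj : Function.Injective g := by
    intro t₁ t₂ e
    have e' : t₁ • (p₂ - p₁) = t₂ • (p₂ - p₁) := by
      have := e; simp only [hg] at this; exact add_left_cancel this
    exact smul_left_injective ℝ (sub_ne_zero.2 (Ne.symm hp₁p₂)) e'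
  have hhinj : Function.Injective h := by
    intro t₁ t₂ e
    have e' : t₁ • (q₁ - q₂) = t₂ • (q₁ - q₂) := by
      have := e; simp only [hh] at this; exact add_left_cancel this
    exact smul_left_injective ℝ (sub_ne_zero.2 (Ne.symm hq₂q₁)) e'
  have hg0 : g 0 = p₁ := by simp [hg]
  have hg1 : g 1 = p₂ := by simp [hg]
  have hh0 : h 0 = q₂ := by simp [hh]
  have hh1 : h 1 = q₁ := by simp [hh]
  -- closedness
  have hPclosed : IsClosed P := by
    rw [← hfim]
    exact (isCompact_Icc.image_of_continuousOn hfc).isClosed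
  have hS₂closed : IsClosed (segment ℝ q₂ q₁) := by
    rw [← hhim]
    exact (isCompact_Icc.image_of_continuousOn hhc.continuousOn).isClosed
  -- first hitting time of P ∪ S₂ along the segment from p₁ to p₂
  set T : Set ℝ := Set.Icc 0 1 ∩ g ⁻¹' (P ∪ segment ℝ q₂ q₁) with hT
  have hTclosed : IsClosed T := isClosed_Icc.inter ((hPclosed.union hS₂closed).preimage hgc)
  have hT1 : (1:ℝ) ∈ T := ⟨⟨zero_le_one, le_refl 1⟩, by
    simp only [Set.mem_preimage, hg1]; exact Or.inl hp₂P⟩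
  set a : ℝ := sInf T with ha
  have haT : a ∈ T := hTclosed.csInf_mem ⟨1, hT1⟩ ⟨0, fun x hx => hx.1.1⟩
  have ha0 : 0 < a := by
    rcases lt_or_eq_of_le haT.1.1 with h | h
    · exact h
    · exfalso
      have : g 0 ∈ P ∪ segment ℝ q₂ q₁ := h ▸ haT.2
      rw [hg0] at this
      exact hp₁ this
  have hmin : ∀ t, 0 ≤ t → t < a → g t ∉ P ∪ segment ℝ q₂ q₁ := by
    intro t ht0 hta hmem
    have : a ≤ t := csInf_le ⟨0, fun x hx => hx.1.1⟩ ⟨⟨ht0, hta.le.trans haT.1.2⟩, hmem⟩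
    linarith
  have hgaS₁ : g a ∈ segment ℝ p₁ p₂ := by rw [← hgim]; exact ⟨a, haT.1, rfl⟩
  have hgaS₂ : g a ∉ segment ℝ q₂ q₁ := fun hc => hdisj' (g a) hgaS₁ hc
  have hgaP : g a ∈ P := by
    rcases haT.2 with h | h
    · exact h
    · exact absurd h hgaS₂
  -- g a = F u for some u
  obtain ⟨u, huI, hu⟩ : ∃ u ∈ Set.Icc (0:ℝ) 1, F u = g a := by
    rw [← hFim] at hgaP
    obtain ⟨u, huI, hu⟩ := hgaP
    exact ⟨u, huI, hu⟩
  -- first hitting time of S₂ along F from u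
  set U : Set ℝ := Set.Icc u 1 ∩ F ⁻¹' (segment ℝ q₂ q₁) with hU
  have hUclosed : IsClosed U := isClosed_Icc.inter (hS₂closed.preimage hFc)
  have hU1 : (1:ℝ) ∈ U := ⟨⟨huI.2, le_refl 1⟩, by
    simp only [Set.mem_preimage, hF1]; exact left_mem_segment ℝ q₂ q₁⟩
  set b : ℝ := sInf U with hb
  have hbU : b ∈ U := hUclosed.csInf_mem ⟨1, hU1⟩ ⟨u, fun x hx => hx.1.1⟩
  have hFbS₂ : F b ∈ segment ℝ q₂ q₁ := hbU.2
  have hub : u < b := by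
    rcases lt_or_eq_of_le hbU.1.1 with hlt | heq
    · exact hlt
    · exfalso
      apply hgaS₂
      rw [← hu, heq]
      exact hFbS₂
  have hminU : ∀ s, u ≤ s → s < b → F s ∉ segment ℝ q₂ q₁ := by
    intro s hs0 hsb hmem
    have : b ≤ s := csInf_le ⟨u, fun x hx => hx.1.1⟩ ⟨⟨hs0, hsb.le.trans hbU.1.2⟩, hmem⟩
    linarith
  have hIccub : Set.Icc u b ⊆ Set.Icc 0 1 :=
    Set.Icc_subset_Icc huI.1 hbU.1.2
  have hFbP : F b ∈ P := by
    rw [← hFim]; exact ⟨b, hIccub ⟨hub.le, le_refl b⟩, rfl⟩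
  -- F b = h s for some s
  obtain ⟨s, hsI, hs⟩ : ∃ s ∈ Set.Icc (0:ℝ) 1, h s = F b := by
    rw [← hhim] at hFbS₂
    obtain ⟨s, hsI, hs⟩ := hFbS₂
    exact ⟨s, hsI, hs⟩
  have hs1 : s < 1 := by
    rcases lt_or_eq_of_le hsI.2 with hlt | heq
    · exact hlt
    · exfalso
      apply hq₁P
      rw [← hh1, ← heq, hs]
      exact hFbP
  -- the three subarcs
  obtain ⟨k₁, hk₁c, hk₁i, hk₁im, hk₁0, hk₁1⟩ :=
    subarc_exists hgc ha0 (hginj.injOn)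
  obtain ⟨k₂, hk₂c, hk₂i, hk₂im, hk₂0, hk₂1⟩ :=
    subarc_exists hFc hub (hFi.mono hIccub)
  obtain ⟨k₃, hk₃c, hk₃i, hk₃im, hk₃0, hk₃1⟩ :=
    subarc_exists hhc hs1 (hhinj.injOn)
  -- subsets
  have hk₁sub : g '' Set.Icc 0 a ⊆ segment ℝ p₁ p₂ := by
    rw [← hgim]; exact Set.image_mono (Set.Icc_subset_Icc (le_refl 0) haT.1.2)
  have hk₂sub : F '' Set.Icc u b ⊆ P := by
    rw [← hFim]; exact Set.image_mono hIccub
  have hk₃sub : h '' Set.Icc s 1 ⊆ segment ℝ q₂ q₁ := by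
    rw [← hhim]; exact Set.image_mono (Set.Icc_subset_Icc hsI.1 (le_refl 1))
  -- concatenate k₁ and k₂ at g a
  have hint₁ : k₁ '' Set.Icc 0 1 ∩ k₂ '' Set.Icc 0 1 ⊆ {g a} := by
    rw [hk₁im, hk₂im]
    rintro x ⟨⟨t, htI, rfl⟩, hx₂⟩
    have hxP : g t ∈ P := by
      obtain ⟨v, hvI, hv⟩ := hx₂
      rw [← hv, ← hFim]
      exact ⟨v, hIccub hvI, rfl⟩
    rcases lt_or_eq_of_le htI.2 with hlt | heq
    · exact absurd (Or.inl hxP) (hmin t htI.1 hlt)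
    · rw [heq]; rfl
  obtain ⟨k₄, hk₄c, hk₄i, hk₄im, hk₄0, hk₄1⟩ :=
    arc_concat hk₁c hk₂c hk₁i hk₂i (by rw [hk₁1]) (by rw [hk₂0, hu]) hint₁
  -- concatenate k₄ and k₃ at F b
  have hint₂ : k₄ '' Set.Icc 0 1 ∩ k₃ '' Set.Icc 0 1 ⊆ {F b} := by
    rw [hk₄im, hk₁im, hk₂im, hk₃im]
    rintro x ⟨hx₁, hx₂⟩
    have hxS₂ : x ∈ segment ℝ q₂ q₁ := hk₃sub hx₂
    rcases hx₁ with ⟨t, htI, rfl⟩ | ⟨v, hvI, rfl⟩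
    · exfalso
      rcases lt_or_eq_of_le htI.2 with hlt | heq
      · exact (hmin t htI.1 hlt) (Or.inr hxS₂)
      · exact hgaS₂ (heq ▸ hxS₂)
    · rcases lt_or_eq_of_le hvI.2 with hlt | heq
      · exact absurd hxS₂ (hminU v hvI.1 hlt)
      · rw [heq]; rfl
  obtain ⟨k₅, hk₅c, hk₅i, hk₅im, hk₅0, hk₅1⟩ :=
    arc_concat hk₄c hk₃c hk₄i hk₃i (by rw [hk₄1, hk₂1]) (by rw [hk₃0, hs]) hint₂
  -- assemble
  refine ⟨k₅ '' Set.Icc 0 1, ⟨k₅, hk₅c.continuousOn, hk₅i, rfl, ?_, ?_⟩, ?_⟩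
  · rw [hk₅0, hk₄0, hk₁0, hg0]
  · rw [hk₅1, hk₃1, hh1]
  · rw [hk₅im, hk₄im, hk₁im, hk₂im, hk₃im]
    rintro x ((hx | hx) | hx)
    · exact Or.inl (Or.inr (hk₁sub hx))
    · exact Or.inl (Or.inl (hk₂sub hx))
    · exact Or.inr (hk₃sub hx)
end
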